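/- arXiv:math/9710211 — 8 statements merged into one kernel-verified Lean document; each statement's English description precedes it below -/
import Mathlib

section
/- Let β₁ < β₂ be points of [0,1) neither of which is periodic under angle doubling. Then the n-th symbols of the kneading sequences of β₁ and β₂ coincide if and only if the number of points of the form a/(2^n - 1), with a ∈ {1, 2, …, 2^n - 2}, lying in the open interval (β₁, β₂) is even. -/
/-- The `i`-th symbol (`i ≥ 1`) of the kneading sequence of `α ∈ [0,1)` under angle doubling:
`0` if `h^(i-1)(α)` lies in the open arc `(α/2, (α+1)/2)`, `1` if it lies in the
complementary open arc `((α+1)/2, α/2)`, and `2` (representing `*`) if it is an endpoint. -/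
noncomputable def kneadSymb (α : ℝ) (i : ℕ) : ℕ :=
  let x := Int.fract (2 ^ (i - 1) * α)
  if x = α / 2 ∨ x = (α + 1) / 2 then 2
  else if α / 2 < x ∧ x < (α + 1) / 2 then 0 else 1

/-- `α ∈ [0,1)` is non-periodic under the angle-doubling map. -/
def NonPeriodic (α : ℝ) : Prop := ∀ n : ℕ, 1 ≤ n → Int.fract (2 ^ n * α) ≠ α

/-- For non-periodic `α ∈ [0,1)`, `(2^n - 1)·α` is never an integer. -/
lemma pow_sub_one_mul_not_int (α : ℝ) (hα : α ∈ Set.Ico (0 : ℝ) 1)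
    (hnp : NonPeriodic α)
    (n : ℕ) (hn : 1 ≤ n) (a : ℤ) : (2 ^ n - 1) * α ≠ (a : ℝ) := by
  intro h
  apply hnp n hn
  have h2 : (2 : ℝ) ^ n * α = (a : ℝ) + α := by nlinarith [h]
  rw [h2, Int.fract_intCast_add, Int.fract_eq_self.mpr ⟨hα.1, hα.2⟩]

/-- When `(2^n - 1)·α` is not an integer, the `n`-th kneading symbol of `α` is
determined by the parity of `⌊(2^n - 1)·α⌋`. -/
lemma kneadSymb_eq_parity (α : ℝ) (hα : α ∈ Set.Ico (0 : ℝ) 1) (n : ℕ) (hn : 1 ≤ n)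
    (hni : ∀ a : ℤ, (2 ^ n - 1) * α ≠ (a : ℝ)) :
    kneadSymb α n = if Even ⌊(2 ^ n - 1) * α⌋ then 0 else 1 := by
  show (let x := Int.fract (2 ^ (n - 1) * α);
      if x = α / 2 ∨ x = (α + 1) / 2 then 2
      else if α / 2 < x ∧ x < (α + 1) / 2 then 0 else 1) = _
  set t : ℝ := (2 ^ n - 1) * α with ht
  set m : ℤ := ⌊(2 : ℝ) ^ (n - 1) * α⌋ with hm
  have hpow : (2 : ℝ) ^ n = 2 ^ (n - 1) * 2 := by
    rw [← pow_succ, Nat.sub_add_cancel hn]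
  have h2 : (2 : ℝ) ^ (n - 1) * α = (t + α) / 2 := by rw [ht, hpow]; ring
  have hfr : Int.fract ((2 : ℝ) ^ (n - 1) * α) = (t + α) / 2 - m := by
    rw [Int.fract, h2, hm, h2]
  have hne : ¬(Int.fract ((2 : ℝ) ^ (n - 1) * α) = α / 2 ∨
      Int.fract ((2 : ℝ) ^ (n - 1) * α) = (α + 1) / 2) := by
    rintro (h | h) <;> rw [hfr] at h
    · exact hni (2 * m) (by push_cast; linarith)
    · exact hni (2 * m + 1) (by push_cast; linarith)
  set k : ℤ := ⌊t⌋ with hk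
  have hk1 : (k : ℝ) < t := lt_of_le_of_ne (Int.floor_le t) (fun h => hni k h.symm)
  have hk2 : t < (k : ℝ) + 1 := Int.lt_floor_add_one t
  have key : (α / 2 < Int.fract ((2 : ℝ) ^ (n - 1) * α) ∧
      Int.fract ((2 : ℝ) ^ (n - 1) * α) < (α + 1) / 2) ↔ Even k := by
    constructor
    · rintro ⟨hlo, hhi⟩
      rw [hfr] at hlo hhi
      have hfl : k = 2 * m := by
        rw [hk]
        apply Int.floor_eq_iff.mpr
        constructor
        · push_cast; linarith
        · push_cast; linarith
      exact ⟨m, by omega⟩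
    · rintro ⟨j, hj⟩
      have hj' : k = 2 * j := by omega
      have hmj : m = j := by
        rw [hm]
        apply Int.floor_eq_iff.mpr
        rw [h2]
        constructor
        · rw [hj'] at hk1; push_cast at hk1 ⊢; linarith [hα.1]
        · rw [hj'] at hk2; push_cast at hk2 ⊢; linarith [hα.2]
      rw [hfr, hmj]
      rw [hj'] at hk1 hk2; push_cast at hk1 hk2
      constructor <;> linarith [hα.1, hα.2]
  simp only []
  rw [if_neg hne]
  by_cases he : Even k
  · rw [if_pos (key.mpr he), if_pos he]
  · rw [if_neg (fun h => he (key.mp h)), if_neg he]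

/-- The set of points `a/(2^n - 1)`, `1 ≤ a ≤ 2^n - 2`, lying in `(β₁, β₂)` has
cardinality `⌊(2^n-1)β₂⌋ - ⌊(2^n-1)β₁⌋`. -/
lemma card_points_eq (β₁ β₂ : ℝ)
    (h₂ : β₂ ∈ Set.Ico (0 : ℝ) 1) (hlt : β₁ < β₂)
    (n : ℕ) (hn : 1 ≤ n)
    (hβ₁pos : 0 < β₁)
    (hni₂ : ∀ a : ℤ, (2 ^ n - 1) * β₂ ≠ (a : ℝ)) :
    Nat.card {a : ℕ | 1 ≤ a ∧ a ≤ 2 ^ n - 2 ∧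
        (a : ℝ) / (2 ^ n - 1) ∈ Set.Ioo β₁ β₂} =
      ⌊(2 ^ n - 1) * β₂⌋.toNat - ⌊(2 ^ n - 1) * β₁⌋.toNat := by
  have h2n : (2 : ℕ) ≤ 2 ^ n := by
    calc (2:ℕ) = 2 ^ 1 := rfl
    _ ≤ 2 ^ n := Nat.pow_le_pow_right (by norm_num) hn
  have hpos : (0 : ℝ) < 2 ^ n - 1 := by
    have : (2:ℝ) ≤ 2 ^ n := by exact_mod_cast (by push_cast; exact_mod_cast h2n : (2:ℝ) ≤ (2^n : ℕ))
    linarith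
  set t₁ : ℝ := (2 ^ n - 1) * β₁ with ht₁
  set t₂ : ℝ := (2 ^ n - 1) * β₂ with ht₂
  set k₁ : ℤ := ⌊t₁⌋ with hk₁
  set k₂ : ℤ := ⌊t₂⌋ with hk₂
  have ht₁pos : 0 < t₁ := mul_pos hpos hβ₁pos
  have hk₁nn : 0 ≤ k₁ := Int.floor_nonneg.mpr ht₁pos.le
  have hk₂nn : 0 ≤ k₂ := hk₁nn.trans (Int.floor_le_floor (by nlinarith))
  have ht₂lt : t₂ < 2 ^ n - 1 := by nlinarith [h₂.2]
  have hset : {a : ℕ | 1 ≤ a ∧ a ≤ 2 ^ n - 2 ∧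
      (a : ℝ) / (2 ^ n - 1) ∈ Set.Ioo β₁ β₂} =
      ↑(Finset.Icc (k₁.toNat + 1) k₂.toNat) := by
    ext a
    simp only [Set.mem_setOf_eq, Finset.coe_Icc, Set.mem_Icc, Set.mem_Ioo]
    have hdiv : (β₁ < (a : ℝ) / (2 ^ n - 1) ∧ (a : ℝ) / (2 ^ n - 1) < β₂) ↔
        (t₁ < a ∧ (a : ℝ) < t₂) := by
      rw [lt_div_iff₀ hpos, div_lt_iff₀ hpos, ht₁, ht₂]
      constructor <;> rintro ⟨u, v⟩ <;> constructor <;> linarith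
    constructor
    · rintro ⟨-, -, hio⟩
      obtain ⟨hl, hr⟩ := hdiv.mp hio
      have hl' : k₁ < (a : ℤ) := Int.floor_lt.mpr (by exact_mod_cast hl)
      have hr' : (a : ℤ) ≤ k₂ := Int.le_floor.mpr (by exact_mod_cast hr.le)
      omega
    · rintro ⟨hl, hr⟩
      have hl' : t₁ < a := Int.floor_lt.mp (by omega : k₁ < (a : ℤ))
      have hr'' : (a : ℝ) ≤ t₂ := Int.le_floor.mp (by omega : (a : ℤ) ≤ k₂)
      have hr' : (a : ℝ) < t₂ := lt_of_le_of_ne hr'' (fun h => hni₂ a h.symm)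
      refine ⟨?_, ?_, hdiv.mpr ⟨hl', hr'⟩⟩
      · by_contra h
        have : a = 0 := by omega
        subst this; simp at hl'; linarith
      · have : (a : ℝ) < ((2 ^ n - 1 : ℕ) : ℝ) := by
          rw [Nat.cast_sub (by omega : 1 ≤ 2 ^ n)]; push_cast; linarith
        have := Nat.cast_lt.mp this
        omega
  rw [hset, Nat.card_coe_set_eq, Set.ncard_coe_finset, Nat.card_Icc]
  omega

/-- For non-periodic `β₁ < β₂` in `[0,1)`, the `n`-th kneading symbols coincide iff the number
of points `a/(2^n - 1)`, `1 ≤ a ≤ 2^n - 2`, in the open interval `(β₁, β₂)` is even. -/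
theorem kneading_symbols_eq_iff_even (β₁ β₂ : ℝ)
    (h₁ : β₁ ∈ Set.Ico (0 : ℝ) 1) (h₂ : β₂ ∈ Set.Ico (0 : ℝ) 1) (hlt : β₁ < β₂)
    (hnp₁ : NonPeriodic β₁) (hnp₂ : NonPeriodic β₂) (n : ℕ) (hn : 1 ≤ n) :
    kneadSymb β₁ n = kneadSymb β₂ n ↔
      Even (Nat.card {a : ℕ | 1 ≤ a ∧ a ≤ 2 ^ n - 2 ∧
        (a : ℝ) / (2 ^ n - 1) ∈ Set.Ioo β₁ β₂}) := by
  have hni₁ := pow_sub_one_mul_not_int β₁ h₁ hnp₁ n hn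
  have hni₂ := pow_sub_one_mul_not_int β₂ h₂ hnp₂ n hn
  have hβ₁pos : 0 < β₁ := by
    rcases lt_or_eq_of_le h₁.1 with h | h
    · exact h
    · exfalso
      apply hnp₁ 1 le_rfl
      rw [← h]
      norm_num
  rw [kneadSymb_eq_parity β₁ h₁ n hn hni₁, kneadSymb_eq_parity β₂ h₂ n hn hni₂,
    card_points_eq β₁ β₂ h₂ hlt n hn hβ₁pos hni₂]
  set k₁ : ℤ := ⌊(2 ^ n - 1) * β₁⌋ with hk₁
  set k₂ : ℤ := ⌊(2 ^ n - 1) * β₂⌋ with hk₂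
  have hk₁nn : 0 ≤ k₁ := by
    apply Int.floor_nonneg.mpr
    have h2n : (1:ℝ) ≤ 2 ^ n := one_le_pow₀ (by norm_num)
    nlinarith
  have hk₁₂ : k₁ ≤ k₂ := by
    apply Int.floor_le_floor
    have h2n : (1:ℝ) ≤ 2 ^ n := one_le_pow₀ (by norm_num)
    nlinarith
  have he₁ : Even k₁ ↔ Even k₁.toNat := by
    rw [← Int.even_coe_nat, Int.toNat_of_nonneg hk₁nn]
  have he₂ : Even k₂ ↔ Even k₂.toNat := by
    rw [← Int.even_coe_nat, Int.toNat_of_nonneg (hk₁nn.trans hk₁₂)]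
  have hle : k₁.toNat ≤ k₂.toNat := by omega
  rw [Nat.even_sub hle]
  by_cases e₁ : Even k₁ <;> by_cases e₂ : Even k₂ <;>
    simp [e₁, e₂, he₁.mp, he₂.mp, (he₁.not).mp, (he₂.not).mp, he₁.symm, he₂.symm]
end

section
/- For α ∈ [0,1) and n ≥ 1, the n-th symbol of the kneading sequence of α equals * if and only if α is periodic under angle doubling and the period of α divides n. -/
/-- The `n`-th kneading symbol of `α ∈ [0,1)` equals `*` iff `α` is periodic under angle
doubling with period dividing `n`, i.e. iff `h^n(α) = α`. -/
theorem kneading_symbol_star_iff (α : ℝ) (hα : α ∈ Set.Ico (0 : ℝ) 1) (n : ℕ) (hn : 1 ≤ n) :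
    kneadSymb α n = 2 ↔ Int.fract (2 ^ n * α) = α := by
  obtain ⟨h0, h1⟩ := hα
  obtain ⟨m, rfl⟩ : ∃ m, n = m + 1 := ⟨n - 1, (Nat.succ_pred_eq_of_pos hn).symm⟩
  have hfa : Int.fract α = α := Int.fract_eq_self.2 ⟨h0, h1⟩
  set x := Int.fract (2 ^ (m + 1 - 1) * α) with hxdef
  have hx0 : 0 ≤ x := Int.fract_nonneg _
  have hx1 : x < 1 := Int.fract_lt_one _
  have aux : ∀ y : ℝ, Int.fract (2 * Int.fract y) = Int.fract (2 * y) := by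
    intro y
    have h : 2 * Int.fract y = 2 * y - ((2 * ⌊y⌋ : ℤ) : ℝ) := by
      simp only [Int.fract]; push_cast; ring
    rw [h, Int.fract_sub_intCast]
  have key : Int.fract (2 ^ (m + 1) * α) = Int.fract (2 * x) := by
    have hpow : (2:ℝ) ^ (m + 1) * α = 2 * (2 ^ (m + 1 - 1) * α) := by
      simp [pow_succ]; ring
    rw [hpow, hxdef, aux]
  have hsym : kneadSymb α (m + 1) = 2 ↔ (x = α / 2 ∨ x = (α + 1) / 2) := by
    show (if x = α / 2 ∨ x = (α + 1) / 2 then 2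
      else if α / 2 < x ∧ x < (α + 1) / 2 then 0 else 1) = 2 ↔ _
    split_ifs with hc hd <;> simp [hc]
  rw [hsym, key]
  constructor
  · rintro (hc | hc)
    · rw [hc]
      have : 2 * (α / 2) = α := by ring
      rw [this, hfa]
    · rw [hc]
      have : 2 * ((α + 1) / 2) = α + 1 := by ring
      rw [this, Int.fract_add_one, hfa]
  · intro h
    have hfl : (2 : ℝ) * x - (⌊2 * x⌋ : ℝ) = α := h
    have hb0 : (0 : ℤ) ≤ ⌊2 * x⌋ := Int.floor_nonneg.2 (by linarith)
    have hb1 : ⌊2 * x⌋ < 2 :=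
      Int.floor_lt.2 (show 2 * x < ((2 : ℤ) : ℝ) by push_cast; linarith)
    interval_cases h2 : ⌊2 * x⌋
    · left; push_cast at hfl; linarith
    · right; push_cast at hfl; linarith
end

section
/- Exactly at the points of the form a/(2^n - 1) with a ∈ {1, …, 2^n - 2}, the n-th symbol of the kneading sequence changes from 0 to 1: that is, as α increases through such a point, the n-th kneading symbol switches value. -/
lemma kneadSymb_def (α : ℝ) (i : ℕ) :
    kneadSymb α i =
      if Int.fract (2 ^ (i - 1) * α) = α / 2 ∨ Int.fract (2 ^ (i - 1) * α) = (α + 1) / 2 then 2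
      else if α / 2 < Int.fract (2 ^ (i - 1) * α ) ∧ Int.fract (2 ^ (i - 1) * α) < (α + 1) / 2
        then 0 else 1 := rfl

/-- Exactly at the points `a/(2^n - 1)` with `1 ≤ a ≤ 2^n - 2` the `n`-th kneading symbol
switches: there is `ε > 0` such that non-periodic angles just below and just above the point
have different `n`-th kneading symbols. -/
theorem kneading_symbol_switches (n : ℕ) (hn : 1 ≤ n) (a : ℕ) (ha1 : 1 ≤ a)
    (ha2 : a ≤ 2 ^ n - 2) :
    ∃ ε > (0 : ℝ), ∀ α α' : ℝ, α ∈ Set.Ico (0 : ℝ) 1 → α' ∈ Set.Ico (0 : ℝ) 1 →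
      NonPeriodic α → NonPeriodic α' →
      (a : ℝ) / (2 ^ n - 1) - ε < α → α < (a : ℝ) / (2 ^ n - 1) →
      (a : ℝ) / (2 ^ n - 1) < α' → α' < (a : ℝ) / (2 ^ n - 1) + ε →
      kneadSymb α n ≠ kneadSymb α' n := by
  have h2 : (2:ℝ) ≤ 2 ^ n := by
    calc (2:ℝ) = 2 ^ 1 := (pow_one 2).symm
    _ ≤ 2 ^ n := by exact pow_le_pow_right₀ one_le_two hn
  have hN : (0:ℝ) < 2 ^ n - 1 := by linarith
  set P : ℝ := 2 ^ (n - 1) with hP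
  have hP0 : (0:ℝ) < P := by positivity
  have hP2 : P * 2 = 2 ^ n := by rw [hP, ← pow_succ, Nat.sub_add_cancel hn]
  have hP1 : (1:ℝ) ≤ P := by linarith
  set p : ℝ := (a:ℝ) / (2 ^ n - 1) with hpdef
  have ha1' : (1:ℝ) ≤ a := by exact_mod_cast ha1
  have ha2' : (a:ℝ) ≤ 2 ^ n - 2 := by
    have h2n : 2 ≤ 2 ^ n := by
      calc 2 = 2 ^ 1 := rfl
      _ ≤ 2 ^ n := Nat.pow_le_pow_right (by norm_num) hn
    have hc := (Nat.cast_le (α := ℝ)).mpr ha2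
    rwa [Nat.cast_sub h2n, Nat.cast_pow, Nat.cast_ofNat] at hc
  have hap : ((2:ℝ) ^ n - 1) * p = a := by rw [hpdef]; field_simp
  have hp0 : 0 < p := div_pos (by linarith) hN
  have hp1 : p < 1 := by rw [hpdef, div_lt_one hN]; linarith
  set k : ℤ := ⌊P * p⌋ with hk
  set y : ℝ := Int.fract (P * p) with hy
  have hy0 : 0 ≤ y := Int.fract_nonneg _
  have hy1 : y < 1 := Int.fract_lt_one _
  have hky : (k:ℝ) = P * p - y := by
    have h := Int.floor_add_fract (P * p)
    rw [← hk, ← hy] at h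
    linarith
  have h2y : 2 * y = (a:ℝ) + p - 2 * k := by
    have h4 : 2 * (P * p) = 2 ^ n * p := by rw [← hP2]; ring
    have h3 : (2:ℝ) ^ n * p = ((2:ℝ) ^ n - 1) * p + p := by ring
    linarith [hap]
  have hcase : y = p / 2 ∨ y = (p + 1) / 2 := by
    set M : ℤ := a - 2 * k with hM
    have hMr : (M:ℝ) = 2 * y - p := by push_cast [hM]; linarith
    have hM0 : (-1:ℝ) < (M:ℝ) := by linarith
    have hM2 : (M:ℝ) < 2 := by linarith
    have hM01 : M = 0 ∨ M = 1 := by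
      have e1 : (-1:ℤ) < M := by exact_mod_cast hM0
      have e2 : M < 2 := by exact_mod_cast hM2
      omega
    rcases hM01 with h | h
    · left; rw [h] at hMr; push_cast at hMr; linarith
    · right; rw [h] at hMr; push_cast at hMr; linarith
  have hy0' : 0 < y := by rcases hcase with h | h <;> rw [h] <;> linarith
  have hy1' : y < 1 := hy1
  set m : ℝ := min y (1 - y) with hm
  have hm1 : m ≤ y := min_le_left _ _
  have hm2 : m ≤ 1 - y := min_le_right _ _
  have hm0 : 0 < m := lt_min hy0' (by linarith)
  refine ⟨m / (P * 2), by positivity, ?_⟩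
  set ε : ℝ := m / (P * 2) with hε
  have hPe : P * ε = m / 2 := by
    rw [hε]
    field_simp
  intro α α' _ _ _ _ h1 h2' h3 h4
  -- fractional part formula near p
  have hfr : ∀ β : ℝ, p - ε < β → β < p + ε → Int.fract (P * β) = P * (β - p) + y := by
    intro β hb1 hb2
    have hsplit : P * β = P * (β - p) + P * p := by ring
    have ht1 : P * (β - p) < P * ε := by
      apply mul_lt_mul_of_pos_left (by linarith) hP0
    have ht2' : P * (-ε) < P * (β - p) := by
      apply mul_lt_mul_of_pos_left (by linarith) hP0
    have hneg : P * (-ε) = -(P * ε) := by ring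
    have hfl : ⌊P * β⌋ = k := by
      rw [Int.floor_eq_iff]
      constructor
      · linarith
      · linarith
    rw [Int.fract, hfl]
    linarith
  have hxα : Int.fract (P * α) = P * (α - p) + y := hfr α (by linarith) (by linarith)
  have hxα' : Int.fract (P * α') = P * (α' - p) + y := hfr α' (by linarith) (by linarith)
  -- bounds on P*(α-p), P*(α'-p)
  have hb1 : P * (α - p) < 0 := mul_neg_of_pos_of_neg hP0 (by linarith)
  have hb2 : -(P * ε) < P * (α - p) := by
    have := mul_lt_mul_of_pos_left (show -ε < α - p by linarith) hP0
    have hneg : P * (-ε) = -(P * ε) := by ring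
    linarith
  have hb3 : 0 < P * (α' - p) := mul_pos hP0 (by linarith)
  have hb4 : P * (α' - p) < P * ε := mul_lt_mul_of_pos_left (by linarith) hP0
  have hts : P * (α - p) < (1/2) * (α - p) := by
    apply mul_lt_mul_of_neg_right (by linarith) (by linarith)
  have hts' : (1/2) * (α' - p) < P * (α' - p) := by
    apply mul_lt_mul_of_pos_right (by linarith) (by linarith)
  rw [kneadSymb_def α n, kneadSymb_def α' n, ← hP, hxα, hxα']
  rcases hcase with hc | hc
  · -- y = p/2 : below gives 1, above gives 0
    have l1 : P * (α - p) + y < α / 2 := by linarith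
    have l2 : P * (α - p) + y < (α + 1) / 2 := by linarith
    have r1 : α' / 2 < P * (α' - p) + y := by linarith
    have r2 : P * (α' - p) + y < (α' + 1) / 2 := by linarith
    rw [if_neg (by push_neg; exact ⟨ne_of_lt l1, ne_of_lt l2⟩),
        if_neg (by rintro ⟨h, -⟩; linarith),
        if_neg (by push_neg; exact ⟨ne_of_gt r1, ne_of_lt r2⟩),
        if_pos ⟨r1, r2⟩]
    norm_num
  · -- y = (p+1)/2 : below gives 0, above gives 1
    have l1 : α / 2 < P * (α - p) + y := by linarith
    have l2 : P * (α - p) + y < (α + 1) / 2 := by linarith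
    have r1 : (α' + 1) / 2 < P * (α' - p) + y := by linarith
    have r2 : α' / 2 < P * (α' - p) + y := by linarith
    rw [if_neg (by push_neg; exact ⟨ne_of_gt l1, ne_of_lt l2⟩),
        if_pos ⟨l1, l2⟩,
        if_neg (by push_neg; exact ⟨ne_of_gt r2, ne_of_gt r1⟩),
        if_neg (by rintro ⟨-, h⟩; linarith)]
    norm_num
end

section
/- Let m ≥ 2, let v = v₁v₂…v_{m-1} be a 0-1-word and e ∈ {0,1} such that the periodic sequence (ve)^∞ = v e v e v e … has exact period m. If for some index i ≥ 1 the subword of (ve)^∞ of length m-1 starting at position i equals v, then i ≡ 1 (mod m). -/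
/-- Let `s` be the periodic 0-1-sequence with repeating block `v e` of length `m ≥ 2`
(`v` a word of length `m - 1`, `e` a symbol), and assume its exact period is `m`.
If the length-`(m-1)` subword of `s` starting at (1-indexed) position `i ≥ 1` equals `v`,
then `i ≡ 1 (mod m)`. -/
theorem subword_position_mod (m : ℕ) (hm : 2 ≤ m) (v : ℕ → Bool) (e : Bool) (s : ℕ → Bool)
    (hs : ∀ k, s k = if k % m = m - 1 then e else v (k % m))
    (hper : ∀ p : ℕ, 1 ≤ p → p < m → ¬ (∀ k, s (k + p) = s k))
    (i : ℕ) (hi : 1 ≤ i) (hsub : ∀ j, j < m - 1 → s (i - 1 + j) = v j) :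
    i % m = 1 := by
  have hm0 : 0 < m := by omega
  haveI : NeZero m := ⟨by omega⟩
  have hmod : ∀ k, s k = s (k % m) := by
    intro k
    rw [hs k, hs (k % m), Nat.mod_mod_of_dvd _ dvd_rfl]
  set r := (i - 1) % m with hr
  have hrlt : r < m := Nat.mod_lt _ hm0
  have key : ∀ j, j < m - 1 → s (r + j) = s j := by
    intro j hj
    have hcong : (i - 1 + j) % m = (r + j) % m := by
      have h := (Nat.mod_modEq (i - 1) m).add_right j
      rw [hr]
      exact h.symm
    have h1 : s (i - 1 + j) = s (r + j) := by
      rw [hmod (i - 1 + j), hmod (r + j), hcong]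
    have h2 : s j = v j := by
      rw [hs j, Nat.mod_eq_of_lt (by omega)]
      simp [show ¬ j = m - 1 by omega]
    rw [← h1, hsub j hj, h2]
  have hr0 : r = 0 := by
    by_contra hne
    set σ : Equiv.Perm (Fin m) := Equiv.addRight (⟨r, hrlt⟩ : Fin m) with hσ
    have hσval : ∀ j : Fin m, (σ j).val = (j.val + r) % m := by
      intro j
      simp [hσ, Fin.add_def]
    have hoff : ∀ j : Fin m, j.val < m - 1 → s ((j.val + r) % m) = s j.val := by
      intro j hj
      rw [← hmod, Nat.add_comm]
      exact key _ hj
    set j₀ : Fin m := ⟨m - 1, by omega⟩ with hj₀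
    have hsum : ∑ j : Fin m, (s ((j.val + r) % m)).toNat
        = ∑ j : Fin m, (s j.val).toNat := by
      have h := Equiv.sum_comp σ (fun j : Fin m => (s j.val).toNat)
      simp only [hσval] at h
      exact h
    have herase : ∑ j ∈ Finset.univ.erase j₀, (s ((j.val + r) % m)).toNat
        = ∑ j ∈ Finset.univ.erase j₀, (s j.val).toNat := by
      apply Finset.sum_congr rfl
      intro j hj
      have hne' : j ≠ j₀ := (Finset.mem_erase.mp hj).1
      have hvlt : j.val < m := j.isLt
      have hvne : j.val ≠ m - 1 := fun h => hne' (Fin.ext h)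
      rw [hoff j (by omega)]
    have h₁ : ∑ j ∈ Finset.univ.erase j₀, (s ((j.val + r) % m)).toNat
        + (s ((j₀.val + r) % m)).toNat
        = ∑ j : Fin m, (s ((j.val + r) % m)).toNat :=
      Finset.sum_erase_add _ _ (Finset.mem_univ j₀)
    have h₂ : ∑ j ∈ Finset.univ.erase j₀, (s j.val).toNat + (s j₀.val).toNat
        = ∑ j : Fin m, (s j.val).toNat :=
      Finset.sum_erase_add _ _ (Finset.mem_univ j₀)
    have hj₀nat : (s ((j₀.val + r) % m)).toNat = (s j₀.val).toNat := by omega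
    have hj₀eq : s ((j₀.val + r) % m) = s j₀.val := by
      cases hb : s ((j₀.val + r) % m) <;> cases hb' : s j₀.val <;>
        rw [hb, hb'] at hj₀nat <;> simp at hj₀nat
    have hall : ∀ j : Fin m, s ((j.val + r) % m) = s j.val := by
      intro j
      rcases eq_or_ne j j₀ with rfl | hne'
      · exact hj₀eq
      · have hvne : j.val ≠ m - 1 := fun h => hne' (Fin.ext h)
        exact hoff j (by have := j.isLt; omega)
    apply hper r (by omega) hrlt
    intro k
    have hk : k % m < m := Nat.mod_lt _ hm0
    have hthis := hall ⟨k % m, hk⟩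
    calc s (k + r) = s ((k + r) % m) := hmod _
      _ = s ((k % m + r) % m) := by
          rw [Nat.add_mod, Nat.mod_mod_of_dvd _ dvd_rfl, ← Nat.add_mod]
      _ = s (k % m) := hthis
      _ = s k := (hmod k).symm
  obtain ⟨q, hq⟩ := Nat.dvd_of_mod_eq_zero hr0
  rw [show i = 1 + m * q by omega, Nat.add_mul_mod_self_left,
    Nat.mod_eq_of_lt (by omega)]
end

section
/- Let m ≥ 2 and let v be a 0-1-word of length m-1 and e ∈ {0,1} such that the periodic sequence (ve)^∞ has exact period m. If the subword of (ve)^∞ of length m-1 starting at position i equals v, then the symbol at position i+m-1 of (ve)^∞ equals e. -/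
/-- Let `s` be the periodic 0-1-sequence with repeating block `v e` of length `m ≥ 2`
(`v` a word of length `m - 1`, `e` a symbol), with exact period `m`.
If the length-`(m-1)` subword of `s` starting at (1-indexed) position `i ≥ 1` equals `v`,
then the symbol at position `i + m - 1` of `s` equals `e`. -/
theorem symbol_after_subword (m : ℕ) (hm : 2 ≤ m) (v : ℕ → Bool) (e : Bool) (s : ℕ → Bool)
    (hs : ∀ k, s k = if k % m = m - 1 then e else v (k % m))
    (hper : ∀ p : ℕ, 1 ≤ p → p < m → ¬ (∀ k, s (k + p) = s k))
    (i : ℕ) (hi : 1 ≤ i) (hsub : ∀ j, j < m - 1 → s (i - 1 + j) = v j) :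
    s (i + m - 2) = e := by
  have hm0 : 0 < m := by omega
  have hmod : ∀ a b : ℕ, a % m = b % m → s a = s b := by
    intro a b h; rw [hs a, hs b, h]
  set r := (i - 1) % m with hr
  have hrlt : r < m := Nat.mod_lt _ hm0
  have him : i + m - 2 = (i - 1) + (m - 1) := by omega
  by_cases hr0 : r = 0
  · have h1 : (i + m - 2) % m = m - 1 := by
      rw [him, Nat.add_mod, ← hr, hr0, Nat.zero_add, Nat.mod_mod_of_dvd _ dvd_rfl,
        Nat.mod_eq_of_lt (by omega)]
    rw [hs, if_pos h1]
  · have hr1 : 1 ≤ r := by omega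
    -- key step: shifting by r preserves s away from residue m-1
    have hstep : ∀ n : ℕ, n % m ≠ m - 1 → s (n + r) = s n := by
      intro n hn
      have hj : n % m < m - 1 := by
        have := Nat.mod_lt n hm0; omega
      have h1 : s (n + r) = s (i - 1 + n % m) := by
        apply hmod
        conv_lhs => rw [Nat.add_mod, Nat.mod_eq_of_lt hrlt]
        conv_rhs => rw [Nat.add_mod, ← hr, Nat.mod_mod_of_dvd n dvd_rfl]
        rw [Nat.add_comm (n % m) r]
      rw [h1, hsub _ hj, hs n, if_neg hn]
    -- chain lemma
    have chain : ∀ t : ℕ, (∀ u, u < t → (r - 1 + u * r) % m ≠ m - 1) →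
        s (r - 1 + t * r) = s (r - 1) := by
      intro t
      induction t with
      | zero => intro _; simp
      | succ t ih =>
        intro h
        have h1 : r - 1 + (t + 1) * r = (r - 1 + t * r) + r := by
          rw [Nat.succ_mul]; omega
        rw [h1, hstep _ (h t (by omega)), ih (fun u hu => h u (by omega))]
    set d := Nat.gcd r m with hd
    have hd0 : 0 < d := Nat.gcd_pos_of_pos_left _ hr1
    have hdr : d ∣ r := Nat.gcd_dvd_left _ _
    have hdm : d ∣ m := Nat.gcd_dvd_right _ _
    have hmd1 : 1 ≤ m / d := Nat.one_le_div_iff hd0 |>.mpr (Nat.le_of_dvd hm0 hdm |>.trans_eq rfl)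
    have hrd1 : 1 ≤ r / d := Nat.one_le_div_iff hd0 |>.mpr (Nat.le_of_dvd hr1 hdr |>.trans_eq rfl)
    set t := m / d - 1 with ht
    have hcop : Nat.Coprime (m / d) (r / d) := by
      have := Nat.coprime_div_gcd_div_gcd (m := r) (n := m) hd0
      exact this.symm
    have hcond : ∀ u, u < t → (r - 1 + u * r) % m ≠ m - 1 := by
      intro u hu hcontra
      have h2 : ((r - 1 + u * r) + 1) % m = 0 := by
        rw [Nat.add_mod, hcontra, Nat.mod_eq_of_lt (show (1:ℕ) < m by omega),
          show m - 1 + 1 = m by omega, Nat.mod_self]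
      have h3 : (r - 1 + u * r) + 1 = (u + 1) * r := by ring_nf; omega
      rw [h3] at h2
      have h4 : m ∣ (u + 1) * r := Nat.dvd_of_mod_eq_zero h2
      have h5 : m / d ∣ (u + 1) * (r / d) := by
        rcases hdm with ⟨m', hm'⟩
        rcases hdr with ⟨r', hr'⟩
        have hm'' : m / d = m' := by rw [hm', Nat.mul_div_cancel_left _ hd0]
        have hr'' : r / d = r' := by rw [hr', Nat.mul_div_cancel_left _ hd0]
        rw [hm'', hr'']
        rcases h4 with ⟨c, hc⟩
        refine ⟨c, ?_⟩
        have key : d * ((u + 1) * r') = d * (m' * c) := by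
          calc d * ((u + 1) * r') = (u + 1) * (d * r') := by ring
            _ = (u + 1) * r := by rw [← hr']
            _ = m * c := hc
            _ = d * (m' * c) := by rw [hm']; ring
        exact Nat.eq_of_mul_eq_mul_left hd0 key
      have h6 : m / d ∣ (u + 1) := hcop.dvd_of_dvd_mul_right h5
      have h7 : m / d ≤ u + 1 := Nat.le_of_dvd (by omega) h6
      omega
    have hfin : (r - 1 + t * r) % m = m - 1 := by
      have h1 : r - 1 + t * r = (t + 1) * r - 1 := by
        rw [Nat.succ_mul]; omega
      have h2 : (t + 1) * r = m * (r / d) := by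
        have ht1 : t + 1 = m / d := by omega
        rw [ht1]
        rcases hdm with ⟨m', hm'⟩
        rcases hdr with ⟨r', hr'⟩
        have hm'' : m / d = m' := by rw [hm', Nat.mul_div_cancel_left _ hd0]
        have hr'' : r / d = r' := by rw [hr', Nat.mul_div_cancel_left _ hd0]
        rw [hm'', hr'', hm', hr']; ring
      rw [h1, h2]
      have h3 : m * (r / d) - 1 = m * (r / d - 1) + (m - 1) := by
        rcases Nat.exists_eq_add_of_le hrd1 with ⟨k, hk⟩
        rw [hk, Nat.add_sub_cancel_left, Nat.mul_add, Nat.mul_one]; omega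
      rw [h3, Nat.mul_add_mod, Nat.mod_eq_of_lt (by omega)]
    -- conclude
    have hlast : s (r - 1 + t * r) = e := by
      rw [hs, if_pos hfin]
    have hsr : s (r - 1) = e := by rw [← chain t hcond, hlast]
    have hgoal : s (i + m - 2) = s (r - 1) := by
      apply hmod
      rw [him, Nat.add_mod, ← hr, Nat.mod_eq_of_lt (show m - 1 < m by omega),
        show r + (m - 1) = m + (r - 1) by omega, Nat.add_mod_left,
        Nat.mod_eq_of_lt (show r - 1 < m by omega)]
    rw [hgoal, hsr]
end

section
/- Let I be a closed arc of the circle T of length at least 1/(2^q - 1), whose endpoints γ and δ are periodic of period q under angle doubling and lie on a common orbit. Then the union of the iterates h^i(I) for i = 0, 1, …, q-1 covers all of T. -/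
/-- Let `I` be a closed arc of the circle of length `t ≥ 1/(2^q - 1)` (and `t ≤ 1/2`, being
the smaller arc), whose endpoints `γ` and `γ + t` are periodic of period `q` under angle
doubling and lie on a common orbit. Then `⋃_{i=0}^{q-1} h^i(I) = T`. -/
theorem iterates_of_arc_cover (q : ℕ) (hq : 1 ≤ q) (γ t : ℝ) (ht0 : 0 ≤ t) (ht2 : t ≤ 1 / 2)
    (hlen : 1 / (2 ^ q - 1) ≤ t)
    (hγ : ∃ k : ℤ, ((2 : ℝ) ^ q - 1) * γ = k)
    (hδ : ∃ k : ℤ, ((2 : ℝ) ^ q - 1) * (γ + t) = k)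
    (horb : ∃ (j : ℕ) (k : ℤ), (2 : ℝ) ^ j * γ = (γ + t) + k) :
    (⋃ i ∈ Finset.range q, (fun x : AddCircle (1 : ℝ) => (2 ^ i : ℕ) • x) ''
        ((fun r : ℝ => (r : AddCircle (1 : ℝ))) '' Set.Icc γ (γ + t))) = Set.univ := by
  classical
  obtain ⟨kγ, hkγ⟩ := hγ
  obtain ⟨j, k0, hj⟩ := horb
  have hq0 : 0 < q := hq
  have h2q : (2:ℝ) ≤ 2 ^ q := by
    calc (2:ℝ) = 2 ^ 1 := (pow_one 2).symm
    _ ≤ 2 ^ q := pow_le_pow_right₀ (by norm_num) hq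
  have ht : 0 < t := lt_of_lt_of_le (div_pos one_pos (by linarith)) hlen
  -- periodicity mod 1 : 2^n γ ≡ 2^(n % q) γ
  have hC : ∀ n : ℕ, ∃ m : ℤ, (2:ℝ) ^ n * γ = 2 ^ (n % q) * γ + m := by
    intro n
    have hn : n = q * (n / q) + n % q := (Nat.div_add_mod n q).symm
    set a := n / q
    set b := n % q
    refine ⟨2 ^ b * kγ * (∑ i ∈ Finset.range a, (2 ^ q : ℤ) ^ i), ?_⟩
    have hgeom : ((2:ℝ) ^ q - 1) * (∑ i ∈ Finset.range a, ((2:ℝ) ^ q) ^ i)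
        = ((2:ℝ) ^ q) ^ a - 1 := by
      rw [mul_comm]
      exact geom_sum_mul ((2:ℝ)^q) a
    have key : (2:ℝ) ^ n * γ - 2 ^ b * γ = 2 ^ b * (((2:ℝ) ^ q) ^ a - 1) * γ := by
      rw [hn, pow_add, pow_mul]
      ring
    rw [← hgeom] at key
    push_cast
    linear_combination key + 2 ^ b * (∑ i ∈ Finset.range a, ((2:ℝ) ^ q) ^ i) * hkγ
  -- the chain of arcs
  set e : ℕ → ℕ := fun s => (s * j) % q with he
  set c : ℕ → ℝ := fun s => γ + t * ∑ r ∈ Finset.range s, (2:ℝ) ^ (e r) with hc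
  have hcsucc : ∀ s, c (s + 1) = c s + t * 2 ^ (e s) := by
    intro s
    simp only [hc, Finset.sum_range_succ]
    ring
  have hB : ∀ s, ∃ m : ℤ, c s = 2 ^ (e s) * γ + m := by
    intro s
    induction s with
    | zero =>
      refine ⟨0, ?_⟩
      simp [hc, he]
    | succ s ih =>
      obtain ⟨m, hm⟩ := ih
      obtain ⟨m', hm'⟩ := hC (e s + j)
      have hee : (e s + j) % q = e (s + 1) := by
        simp only [he]
        rw [Nat.mod_add_mod]
        ring_nf
      refine ⟨m' + m - 2 ^ (e s) * k0, ?_⟩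
      rw [hee] at hm'
      rw [hcsucc, hm]
      push_cast
      linear_combination hm' - (2:ℝ) ^ (e s) * hj
  -- total length is a positive integer
  obtain ⟨M, hM⟩ := hB q
  have heq0 : e q = 0 := by simp [he, Nat.mul_mod_right]
  have hcqM : c q = γ + M := by rw [hM, heq0]; ring
  have hLpos : γ < c q := by
    have : 0 < t * ∑ r ∈ Finset.range q, (2:ℝ) ^ (e r) := by
      apply mul_pos ht
      apply Finset.sum_pos (fun i _ => by positivity) ⟨0, Finset.mem_range.mpr hq0⟩
    simp only [hc]; linarith
  have hM1 : (1:ℝ) ≤ M := by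
    have h0 : (0:ℝ) < M := by rw [hcqM] at hLpos; linarith
    have h0i : (0:ℤ) < M := by exact_mod_cast h0
    exact_mod_cast h0i
  have hcq1 : γ + 1 ≤ c q := by rw [hcqM]; linarith
  -- covering
  rw [Set.eq_univ_iff_forall]
  intro z
  obtain ⟨y₀, hy₀⟩ := QuotientAddGroup.mk_surjective z
  set y : ℝ := y₀ - ⌊y₀ - γ⌋ with hy
  have hyz : (y : AddCircle (1:ℝ)) = z := by
    have hfloor : (((⌊y₀ - γ⌋ : ℝ)) : AddCircle (1:ℝ)) = 0 := by
      rw [AddCircle.coe_eq_zero_iff]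
      exact ⟨⌊y₀ - γ⌋, by simp⟩
    rw [← hy₀]
    show (((y₀ - (⌊y₀ - γ⌋ : ℝ)) : ℝ) : AddCircle (1:ℝ)) = ((y₀ : ℝ) : AddCircle (1:ℝ))
    rw [sub_eq_add_neg, QuotientAddGroup.mk_add, QuotientAddGroup.mk_neg, hfloor, neg_zero,
      add_zero]
  have hy1 : γ ≤ y := by
    have := Int.floor_le (y₀ - γ); simp only [hy]; linarith
  have hy2 : y < γ + 1 := by
    have := Int.lt_floor_add_one (y₀ - γ); simp only [hy]; push_cast; linarith
  -- find the link of the chain containing y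
  have hex : ∃ s, y < c s := ⟨q, lt_of_lt_of_le hy2 hcq1⟩
  set s' := Nat.find hex with hs'
  have hs'pos : 0 < s' := by
    rcases Nat.eq_zero_or_pos s' with h | h
    · exfalso
      have := Nat.find_spec hex
      rw [← hs', h] at this
      simp only [hc, Finset.range_zero, Finset.sum_empty, mul_zero, add_zero] at this
      linarith
    · exact h
  set s := s' - 1 with hs
  have hss : s + 1 = s' := Nat.succ_pred_eq_of_pos hs'pos
  have hys1 : c s ≤ y := by
    by_contra h
    exact Nat.find_min hex (by omega : s < s') (by linarith)
  have hys2 : y < c (s + 1) := by rw [hss]; exact Nat.find_spec hex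
  have hsq : s < q := by
    have : s' ≤ q := Nat.find_le (lt_of_lt_of_le hy2 hcq1)
    omega
  -- membership
  rw [Set.mem_iUnion]
  refine ⟨e s, ?_⟩
  rw [Set.mem_iUnion]
  refine ⟨Finset.mem_range.mpr (Nat.mod_lt _ hq0), ?_⟩
  obtain ⟨m, hm⟩ := hB s
  set w : ℝ := (y - m) / 2 ^ (e s) with hw
  have hpow : (0:ℝ) < 2 ^ (e s) := by positivity
  have hw1 : γ ≤ w := by
    rw [hw, le_div_iff₀ hpow]
    rw [hm] at hys1
    linarith
  have hw2 : w ≤ γ + t := by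
    rw [hw, div_le_iff₀ hpow]
    rw [hcsucc, hm] at hys2
    nlinarith
  refine ⟨(w : AddCircle (1:ℝ)), ⟨w, ⟨hw1, hw2⟩, rfl⟩, ?_⟩
  show ((2:ℕ) ^ (e s)) • (w : AddCircle (1:ℝ)) = z
  have h1 : ((2:ℕ) ^ (e s)) • (w : AddCircle (1:ℝ))
      = (((2:ℝ) ^ (e s) * w : ℝ) : AddCircle (1:ℝ)) := by
    rw [← AddCircle.coe_nsmul]
    norm_num [nsmul_eq_mul]
  rw [h1]
  have h2 : (2:ℝ) ^ (e s) * w = y - m := by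
    rw [hw, mul_div_cancel₀]
    positivity
  rw [h2, ← hyz]
  have hmz : (((m:ℝ)) : AddCircle (1:ℝ)) = 0 := by
    rw [AddCircle.coe_eq_zero_iff]
    exact ⟨m, by simp⟩
  rw [sub_eq_add_neg, QuotientAddGroup.mk_add, QuotientAddGroup.mk_neg, hmz]
  simp
end

section
/- Let S be a chord of the circle with periodic endpoints of exact period m under angle doubling, both endpoints lying on the same orbit, and suppose no two chords among S, h(S), …, h^{m-1}(S) cross. If the chords Ṡ and S̈ obtained as the two preimages of S under h both have length a ≥ 1/3, then the four endpoints of Ṡ and S̈ span a rectangle with side lengths a and 1/2 - a (as arc lengths). -/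
/-- Circle distance between angles `x, y` (arc distance, total circle length `1`). -/
noncomputable def circDist (x y : ℝ) : ℝ := min (Int.fract (x - y)) (Int.fract (y - x))

/-- `x` lies in the open counterclockwise arc from `a` to `b` (angles in `[0,1)`). -/
def inArc (a b x : ℝ) : Prop := if a < b then a < x ∧ x < b else a < x ∨ x < b

/-- The chords with endpoint angles `a, b` and `c, d` cross. -/
def crossChord (a b c d : ℝ) : Prop := Xor' (inArc a b c) (inArc a b d)

lemma circDist_of_lt (u v : ℝ) (hu : 0 ≤ u) (hv : v < 1) (huv : u < v) :
    circDist u v = min (v - u) (u - v + 1) := by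
  unfold circDist
  have h2 : Int.fract (u - v) = u - v + 1 := by
    have h := Int.fract_add_intCast (u - v + 1) (-1)
    rw [show ((u - v + 1) + ((-1 : ℤ) : ℝ)) = u - v by push_cast; ring] at h
    rw [h, Int.fract_eq_self.mpr ⟨by linarith, by linarith⟩]
  rw [h2, Int.fract_eq_self.mpr ⟨by linarith, by linarith⟩, min_comm]

/-- Let `S` be a chord with endpoints `β₁, β₂ ∈ [0,1)` of exact period `m` under angle
doubling, lying on a common orbit, whose iterates `S, h(S), …, h^{m-1}(S)` pairwise do not
cross. If the two preimage chords `Ṡ = (β₁/2)((β₂+1)/2)` and `S̈ = ((β₁+1)/2)(β₂/2)` both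
have length `a ≥ 1/3`, then the four endpoints span a rectangle with arc side lengths `a`
and `1/2 - a`. -/
theorem preimage_chords_rectangle (m : ℕ) (hm : 1 ≤ m) (β₁ β₂ : ℝ)
    (h₁ : β₁ ∈ Set.Ico (0 : ℝ) 1) (h₂ : β₂ ∈ Set.Ico (0 : ℝ) 1) (hne : β₁ ≠ β₂)
    (hp₁ : Int.fract (2 ^ m * β₁) = β₁)
    (hmin₁ : ∀ k : ℕ, 1 ≤ k → k < m → Int.fract (2 ^ k * β₁) ≠ β₁)
    (hp₂ : Int.fract (2 ^ m * β₂) = β₂)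
    (hmin₂ : ∀ k : ℕ, 1 ≤ k → k < m → Int.fract (2 ^ k * β₂) ≠ β₂)
    (horb : ∃ j : ℕ, Int.fract (2 ^ j * β₁) = β₂)
    (hnc : ∀ i j : ℕ, i < m → j < m → i ≠ j →
      ¬ crossChord (Int.fract (2 ^ i * β₁)) (Int.fract (2 ^ i * β₂))
        (Int.fract (2 ^ j * β₁)) (Int.fract (2 ^ j * β₂)))
    (a : ℝ) (ha : 1 / 3 ≤ a)
    (hS1 : circDist (β₁ / 2) ((β₂ + 1) / 2) = a)
    (hS2 : circDist ((β₁ + 1) / 2) (β₂ / 2) = a) :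
    circDist (β₁ / 2) (β₂ / 2) = 1 / 2 - a ∧
      circDist ((β₁ + 1) / 2) ((β₂ + 1) / 2) = 1 / 2 - a := by
  obtain ⟨hb1, hb1'⟩ := h₁
  obtain ⟨hb2, hb2'⟩ := h₂
  rcases lt_or_gt_of_ne hne with hlt | hlt
  · rw [circDist_of_lt _ _ (by linarith) (by linarith) (by linarith),
      min_eq_right (by linarith)] at hS1
    rw [circDist_of_lt _ _ (by linarith) (by linarith) (by linarith),
      min_eq_left (by linarith),
      circDist_of_lt _ _ (by linarith) (by linarith) (by linarith),
      min_eq_left (by linarith)]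
    constructor <;> linarith
  · rw [show circDist ((β₁ + 1) / 2) (β₂ / 2) = circDist (β₂ / 2) ((β₁ + 1) / 2) by
        unfold circDist; rw [min_comm],
      circDist_of_lt _ _ (by linarith) (by linarith) (by linarith),
      min_eq_right (by linarith)] at hS2
    rw [show circDist (β₁ / 2) (β₂ / 2) = circDist (β₂ / 2) (β₁ / 2) by
        unfold circDist; rw [min_comm],
      circDist_of_lt _ _ (by linarith) (by linarith) (by linarith),
      min_eq_left (by linarith),
      show circDist ((β₁ + 1) / 2) ((β₂ + 1) / 2)
          = circDist ((β₂ + 1) / 2) ((β₁ + 1) / 2) by unfold circDist; rw [min_comm],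
      circDist_of_lt _ _ (by linarith) (by linarith) (by linarith),
      min_eq_left (by linarith)]
    constructor <;> linarith
end

section
/- Let β₁ < β₂ be points of [0,1) such that for every j ≥ 1 the number of points a/(2^j - 1) (a integer, 1 ≤ a ≤ 2^j - 2) in the open interval (β₁, β₂) is even. Then for any sequence (α_i) of non-periodic points converging to β₁ from within (β₁, β₂), and any sequence (α'_i) of non-periodic points converging to β₂ from within (β₁, β₂), the kneading sequences of α_i and of α'_i converge (symbol-wise) to a common limit sequence. -/
/-- For a non-periodic point of `[0,1)`, the `n`-th kneading symbol is the parity of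
`⌊(2^n - 1) α⌋`. -/
lemma kneadSymb_eq (α : ℝ) (hα0 : 0 ≤ α) (hα1 : α < 1) (hnp : NonPeriodic α)
    (n : ℕ) (hn : 1 ≤ n) :
    kneadSymb α n = if Even ⌊((2:ℝ) ^ n - 1) * α⌋ then 0 else 1 := by
  have h2n : (2:ℝ) ^ (n - 1) * 2 = 2 ^ n := by
    rw [← pow_succ]; congr 1; omega
  have hnotint : ∀ k : ℤ, ((2:ℝ) ^ n - 1) * α ≠ (k : ℝ) := by
    intro k hk
    apply hnp n hn
    have h2 : (2:ℝ) ^ n * α = α + k := by nlinarith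
    rw [h2, Int.fract_add_intCast, Int.fract_eq_self.mpr ⟨hα0, hα1⟩]
  set x := Int.fract ((2:ℝ) ^ (n - 1) * α) with hxdef
  set k : ℤ := ⌊(2:ℝ) ^ (n - 1) * α⌋ with hkdef
  have hx : x = 2 ^ (n - 1) * α - k := rfl
  have hxk : x + (k : ℝ) = 2 ^ (n - 1) * α := by rw [hx]; ring
  have hy : ((2:ℝ) ^ n - 1) * α = 2 * x + 2 * k - α := by
    rw [← h2n]; linear_combination (-2 : ℝ) * hxk
  have hx0 : 0 ≤ x := Int.fract_nonneg _
  have hx1 : x < 1 := Int.fract_lt_one _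
  have hne1 : x ≠ α / 2 := by
    intro h
    exact hnotint (2 * k) (by rw [hy, h]; push_cast; ring)
  have hne2 : x ≠ (α + 1) / 2 := by
    intro h
    exact hnotint (2 * k + 1) (by rw [hy, h]; push_cast; ring)
  have hiff : (α / 2 < x ∧ x < (α + 1) / 2) ↔ Even ⌊((2:ℝ) ^ n - 1) * α⌋ := by
    constructor
    · rintro ⟨h1, h2⟩
      have hfl : ⌊((2:ℝ) ^ n - 1) * α⌋ = 2 * k := by
        rw [Int.floor_eq_iff]
        push_cast
        exact ⟨by linarith, by linarith⟩
      rw [hfl]; exact even_two_mul k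
    · intro he
      have hlb : (2 * k - 1 : ℤ) ≤ ⌊((2:ℝ) ^ n - 1) * α⌋ := by
        rw [Int.le_floor]; push_cast; linarith
      have hub : ⌊((2:ℝ) ^ n - 1) * α⌋ < 2 * k + 2 := by
        rw [Int.floor_lt]; push_cast; linarith
      have hfl : ⌊((2:ℝ) ^ n - 1) * α⌋ = 2 * k := by
        rw [Int.even_iff] at he; omega
      have h1 : (2 * k : ℝ) ≤ ((2:ℝ) ^ n - 1) * α := by
        have := Int.floor_le (((2:ℝ) ^ n - 1) * α)
        rw [hfl] at this; push_cast at this; linarith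
      have h1' : (2 * k : ℝ) < ((2:ℝ) ^ n - 1) * α :=
        lt_of_le_of_ne h1 (fun h => hnotint (2 * k) (by push_cast; linarith))
      have h2 : ((2:ℝ) ^ n - 1) * α < 2 * k + 1 := by
        have := Int.lt_floor_add_one (((2:ℝ) ^ n - 1) * α)
        rw [hfl] at this; push_cast at this; linarith
      exact ⟨by linarith, by linarith⟩
  show (if x = α / 2 ∨ x = (α + 1) / 2 then 2
      else if α / 2 < x ∧ x < (α + 1) / 2 then 0 else 1) = _
  rw [if_neg (by push_neg; exact ⟨hne1, hne2⟩)]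
  by_cases h : Even ⌊((2:ℝ) ^ n - 1) * α⌋
  · rw [if_pos (hiff.mpr h), if_pos h]
  · rw [if_neg (fun hc => h (hiff.mp hc)), if_neg h]

/-- If for every `j` the number of points `a/(2^j - 1)` strictly between `β₁` and `β₂` is
even, then the kneading sequences of non-periodic points of `(β₁, β₂)` approaching `β₁`
and those of non-periodic points approaching `β₂` converge symbol-wise to one common limit
sequence. -/
theorem kneading_sequences_common_limit (β₁ β₂ : ℝ)
    (h₁ : β₁ ∈ Set.Ico (0 : ℝ) 1) (h₂ : β₂ ∈ Set.Ico (0 : ℝ) 1) (hlt : β₁ < β₂)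
    (hpar : ∀ j : ℕ, 1 ≤ j → Even (Nat.card {a : ℕ | 1 ≤ a ∧ a ≤ 2 ^ j - 2 ∧
      (a : ℝ) / (2 ^ j - 1) ∈ Set.Ioo β₁ β₂})) :
    ∃ s : ℕ → ℕ, ∀ α α' : ℕ → ℝ,
      (∀ i, α i ∈ Set.Ioo β₁ β₂ ∧ NonPeriodic (α i)) →
      Filter.Tendsto α Filter.atTop (nhds β₁) →
      (∀ i, α' i ∈ Set.Ioo β₁ β₂ ∧ NonPeriodic (α' i)) →
      Filter.Tendsto α' Filter.atTop (nhds β₂) →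
      ∀ n : ℕ, 1 ≤ n →
        (∀ᶠ i in Filter.atTop, kneadSymb (α i) n = s n) ∧
        (∀ᶠ i in Filter.atTop, kneadSymb (α' i) n = s n) := by
  obtain ⟨hβ₁0, hβ₁1⟩ := h₁
  obtain ⟨hβ₂0, hβ₂1⟩ := h₂
  refine ⟨fun n => if Even ⌊((2:ℝ) ^ n - 1) * β₁⌋ then 0 else 1, ?_⟩
  intro α α' hα hαt hα' hα't n hn
  simp only
  set m : ℝ := (2:ℝ) ^ n - 1 with hm
  have h2nn : (2:ℕ) ≤ 2 ^ n := by
    calc (2:ℕ) = 2 ^ 1 := (pow_one 2).symm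
    _ ≤ 2 ^ n := Nat.pow_le_pow_right (by norm_num) hn
  have h2n : (2:ℝ) ≤ 2 ^ n := by
    calc (2:ℝ) = 2 ^ 1 := (pow_one 2).symm
    _ ≤ 2 ^ n := by apply pow_le_pow_right₀ (by norm_num) hn
  have hm1 : (1:ℝ) ≤ m := by rw [hm]; linarith
  have hm0 : (0:ℝ) < m := by linarith
  set b : ℤ := ⌊m * β₁⌋ with hb
  set c : ℤ := ⌈m * β₂⌉ with hc
  have hb0 : 0 ≤ b := Int.floor_nonneg.mpr (by positivity)
  have hbr : (b : ℝ) ≤ m * β₁ := Int.floor_le _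
  have hbr1 : m * β₁ < (b : ℝ) + 1 := Int.lt_floor_add_one _
  have hcr : m * β₂ ≤ (c : ℝ) := Int.le_ceil _
  have hcr1 : (c : ℝ) - 1 < m * β₂ := by
    have := Int.ceil_lt_add_one (m * β₂); push_cast at this ⊢; linarith
  have hbc : b < c := by
    have h : (b : ℝ) < c := by nlinarith
    exact_mod_cast h
  have hcM : c ≤ (2:ℤ) ^ n - 1 := by
    rw [hc, Int.ceil_le]
    push_cast
    nlinarith
  -- parity consequence of the hypothesis
  have hparity : Even b ↔ Even (c - 1) := by
    have hev := hpar n hn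
    have hSet : {a : ℕ | 1 ≤ a ∧ a ≤ 2 ^ n - 2 ∧ (a : ℝ) / (2 ^ n - 1) ∈ Set.Ioo β₁ β₂}
        = ↑(Finset.Icc (b.toNat + 1) (c - 1).toNat) := by
      ext a
      simp only [Set.mem_setOf_eq, Finset.coe_Icc, Set.mem_Icc, Set.mem_Ioo]
      rw [← hm]
      constructor
      · rintro ⟨ha1, ha2, hlo, hhi⟩
        rw [lt_div_iff₀ hm0] at hlo
        rw [div_lt_iff₀ hm0] at hhi
        have hba : b < (a : ℤ) := by
          have : (b : ℝ) < a := by nlinarith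
          exact_mod_cast this
        have hac : (a : ℤ) < c := by
          have : (a : ℝ) < c := by nlinarith
          exact_mod_cast this
        omega
      · rintro ⟨ha1, ha2⟩
        have hba : (b : ℤ) < a := by omega
        have hac : (a : ℤ) ≤ c - 1 := by omega
        have hba' : (b : ℝ) + 1 ≤ a := by exact_mod_cast hba
        have hac' : (a : ℝ) ≤ (c : ℝ) - 1 := by
          have : ((a : ℤ) : ℝ) ≤ ((c - 1 : ℤ) : ℝ) := by exact_mod_cast hac
          push_cast at this; exact this
        refine ⟨by omega, ?_, ?_, ?_⟩
        · have : (a : ℤ) ≤ 2 ^ n - 2 := by omega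
          have h2 : ((2:ℤ) ^ n : ℤ) = ((2 ^ n : ℕ) : ℤ) := by push_cast; ring
          omega
        · rw [lt_div_iff₀ hm0]; nlinarith
        · rw [div_lt_iff₀ hm0]; nlinarith
    rw [hSet] at hev
    have hcard : Nat.card (↑(Finset.Icc (b.toNat + 1) (c - 1).toNat) : Set ℕ) =
        (Finset.Icc (b.toNat + 1) (c - 1).toNat).card :=
      Nat.card_eq_finsetCard _
    rw [hcard, Nat.card_Icc] at hev
    rw [Int.even_iff, Int.even_iff]
    rw [Nat.even_iff] at hev
    omega
  constructor
  · -- sequence approaching β₁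
    have hlt1 : β₁ < ((b : ℝ) + 1) / m := by rw [lt_div_iff₀ hm0]; linarith
    filter_upwards [hαt.eventually_lt_const hlt1] with i hi
    obtain ⟨⟨hi1, hi2⟩, hinp⟩ := hα i
    rw [kneadSymb_eq (α i) (le_trans hβ₁0 hi1.le) (hi2.trans hβ₂1) hinp n hn, ← hm]
    have hfl : ⌊m * α i⌋ = b := by
      rw [Int.floor_eq_iff]
      constructor
      · calc (b : ℝ) ≤ m * β₁ := hbr
          _ ≤ m * α i := by nlinarith
      · have hlt2 : m * α i < m * (((b : ℝ) + 1) / m) := by nlinarith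
        rw [mul_div_cancel₀ _ (ne_of_gt hm0)] at hlt2
        push_cast
        linarith
    rw [hfl]
  · -- sequence approaching β₂
    have hlt1 : ((c : ℝ) - 1) / m < β₂ := by rw [div_lt_iff₀ hm0]; linarith
    filter_upwards [hα't.eventually_const_lt hlt1] with i hi
    obtain ⟨⟨hi1, hi2⟩, hinp⟩ := hα' i
    rw [kneadSymb_eq (α' i) (le_trans hβ₁0 hi1.le) (hi2.trans hβ₂1) hinp n hn, ← hm]
    have hfl : ⌊m * α' i⌋ = c - 1 := by
      rw [Int.floor_eq_iff]
      constructor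
      · have hlt2 : m * (((c : ℝ) - 1) / m) < m * α' i :=
          mul_lt_mul_of_pos_left hi hm0
        rw [mul_div_cancel₀ _ (ne_of_gt hm0)] at hlt2
        push_cast
        linarith
      · have h3 : m * α' i < m * β₂ := by
          exact mul_lt_mul_of_pos_left hi2 hm0
        push_cast
        linarith
    rw [hfl]
    by_cases h : Even b
    · rw [if_pos (hparity.mp h), if_pos h]
    · rw [if_neg (fun hc' => h (hparity.mpr hc')), if_neg h]
end
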